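/- Let a = a_1∘⋯∘a_m and b = b_1∘⋯∘b_n ∈ X* be complete blocks such that neither a nor b contains any left invertible letters. Then GP[a] ⊆ GP[b] if and only if s(b) ⊆ s(a) and, after relabelling the letters of a so that s(a_i) = s(b_i) for 1 ≤ i ≤ n, we have GP[a_i] ⊆ GP[b_i] for each 1 ≤ i ≤ n. -/

import Mathlib

/-! Common definitions for graph products of monoids. -/

variable {V : Type*}

/-- A letter of the graph product alphabet: an element of one of the vertex monoids,
tagged by its vertex (its *support*). -/
abbrev GPLetter (M : V → Type*) : Type _ := (α : V) × M α

/-- The defining relations of the graph product: identity letters are trivial,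
letters from the same vertex monoid multiply, and letters at adjacent vertices commute. -/
def gpRel (G : SimpleGraph V) (M : V → Type*) [∀ α, Monoid (M α)] :
    FreeMonoid (GPLetter M) → FreeMonoid (GPLetter M) → Prop := fun w₁ w₂ =>
  (∃ α : V, w₁ = FreeMonoid.of (⟨α, (1 : M α)⟩ : GPLetter M) ∧ w₂ = 1) ∨
  (∃ (α : V) (x y : M α),
      w₁ = FreeMonoid.of (⟨α, x⟩ : GPLetter M) * FreeMonoid.of (⟨α, y⟩ : GPLetter M) ∧
      w₂ = FreeMonoid.of (⟨α, x * y⟩ : GPLetter M)) ∨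
  (∃ (α β : V) (x : M α) (y : M β), G.Adj α β ∧
      w₁ = FreeMonoid.of (⟨α, x⟩ : GPLetter M) * FreeMonoid.of (⟨β, y⟩ : GPLetter M) ∧
      w₂ = FreeMonoid.of (⟨β, y⟩ : GPLetter M) * FreeMonoid.of (⟨α, x⟩ : GPLetter M))

/-- The congruence on the free monoid generated by the graph product relations. -/
def gpCon (G : SimpleGraph V) (M : V → Type*) [∀ α, Monoid (M α)] :
    Con (FreeMonoid (GPLetter M)) := conGen (gpRel G M)

/-- The graph product of the monoids `M α` with respect to the graph `G`. -/
abbrev GraphProduct (G : SimpleGraph V) (M : V → Type*) [∀ α, Monoid (M α)] :=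
  (gpCon G M).Quotient

/-- The class `[w]` in the graph product of a word `w` (given as a list of letters). -/
def gpMk (G : SimpleGraph V) (M : V → Type*) [∀ α, Monoid (M α)]
    (l : List (GPLetter M)) : GraphProduct G M :=
  (gpCon G M).mk' (FreeMonoid.ofList l)

/-- A word is reduced: no letter is an identity, and between any two letters with the
same support there is a letter whose support is not adjacent to it. -/
def GPReduced (G : SimpleGraph V) (M : V → Type*) [∀ α, Monoid (M α)]
    (l : List (GPLetter M)) : Prop :=
  (∀ x ∈ l, x.2 ≠ 1) ∧
    ∀ i j : Fin l.length, i < j → (l.get i).1 = (l.get j).1 →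
      ∃ k : Fin l.length, i < k ∧ k < j ∧ ¬ G.Adj (l.get i).1 (l.get k).1

/-- One shuffle: transpose an adjacent pair of letters whose supports are adjacent in `G`. -/
def ShuffleStep (G : SimpleGraph V) (M : V → Type*)
    (l₁ l₂ : List (GPLetter M)) : Prop :=
  ∃ (u v : List (GPLetter M)) (x y : GPLetter M),
    G.Adj x.1 y.1 ∧ l₁ = u ++ x :: y :: v ∧ l₂ = u ++ y :: x :: v

/-- Two words are shuffle equivalent if one is obtained from the other by a finite
sequence of shuffles. -/
def ShuffleEquiv (G : SimpleGraph V) (M : V → Type*) :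
    List (GPLetter M) → List (GPLetter M) → Prop :=
  Relation.ReflTransGen (ShuffleStep G M)

/-- A letter is left invertible if it is left invertible in its vertex monoid. -/
def LeftInvertibleLetter (M : V → Type*) [∀ α, Monoid (M α)] (x : GPLetter M) : Prop :=
  ∃ y : M x.1, y * x.2 = 1

/-- The set of supports of the letters of a word. -/
def suppSet (M : V → Type*) (l : List (GPLetter M)) : Set V := {α | ∃ x ∈ l, x.1 = α}

/-- A complete block: a reduced word whose support induces a complete subgraph of `G`. -/
def CompleteBlock (G : SimpleGraph V) (M : V → Type*) [∀ α, Monoid (M α)]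
    (l : List (GPLetter M)) : Prop :=
  GPReduced G M l ∧ ∀ x ∈ l, ∀ y ∈ l, x.1 ≠ y.1 → G.Adj x.1 y.1

/-- A list of blocks is a left Foata normal form: the concatenation is reduced, each
block is nonempty with complete support, and each letter of a block fails to be
adjacent to some letter of the preceding block. -/
def LeftFoataForm (G : SimpleGraph V) (M : V → Type*) [∀ α, Monoid (M α)]
    (blocks : List (List (GPLetter M))) : Prop :=
  GPReduced G M blocks.flatten ∧
  (∀ b ∈ blocks, b ≠ [] ∧ ∀ x ∈ b, ∀ y ∈ b, x.1 ≠ y.1 → G.Adj x.1 y.1) ∧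
  List.Chain' (fun b₁ b₂ => ∀ y ∈ b₂, ∃ x ∈ b₁, ¬ G.Adj x.1 y.1) blocks

/-- The principal left ideal `S a = {s * a : s ∈ S}` of a monoid. -/
def plIdeal {S : Type*} [Monoid S] (a : S) : Set S := Set.range (· * a)

/-- The ascending chain condition on principal left ideals. -/
def ACCPL (S : Type*) [Monoid S] : Prop :=
  ∀ a : ℕ → S, (∀ n, plIdeal (a n) ⊆ plIdeal (a (n + 1))) →
    ∃ n, ∀ k, plIdeal (a (n + k)) = plIdeal (a n)

/-- `A` is a left ideal of the monoid `S`. -/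
def IsLeftIdeal {S : Type*} [Monoid S] (A : Set S) : Prop :=
  A.Nonempty ∧ ∀ s : S, ∀ a ∈ A, s * a ∈ A

/-- `A` is generated, as a left ideal, by a finite subset of itself. -/
def IsFGLeftIdeal {S : Type*} [Monoid S] (A : Set S) : Prop :=
  ∃ F : Finset S, ↑F ⊆ A ∧ A = {x | ∃ s : S, ∃ a ∈ F, x = s * a}

/-- A monoid is weakly left noetherian if every left ideal is finitely generated. -/
def WeaklyLeftNoetherian (S : Type*) [Monoid S] : Prop :=
  ∀ A : Set S, IsLeftIdeal A → IsFGLeftIdeal A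

/-- A monoid is left ideal Howson if the intersection of any two principal left ideals
is empty or finitely generated. -/
def LeftIdealHowson (S : Type*) [Monoid S] : Prop :=
  ∀ a b : S, plIdeal a ∩ plIdeal b = ∅ ∨ IsFGLeftIdeal (plIdeal a ∩ plIdeal b)

/-- An LCM monoid: intersections of principal left ideals are empty or principal. -/
def LCMMonoid (S : Type*) [Monoid S] : Prop :=
  ∀ a b : S, plIdeal a ∩ plIdeal b = ∅ ∨ ∃ c : S, plIdeal a ∩ plIdeal b = plIdeal c

/-- A left congruence on a monoid. -/
def IsLeftCongruence {S : Type*} [Monoid S] (ρ : S → S → Prop) : Prop :=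
  Equivalence ρ ∧ ∀ u s t : S, ρ s t → ρ (u * s) (u * t)

/-- The least left congruence containing a set of pairs. -/
def leftConGen {S : Type*} [Monoid S] (R : Set (S × S)) : S → S → Prop := fun s t =>
  ∀ ρ : S → S → Prop, IsLeftCongruence ρ → (∀ p ∈ R, ρ p.1 p.2) → ρ s t

/-- A monoid is finitely left equated if every left annihilator `l(a)` is the left
congruence generated by a finite set. -/
def FinitelyLeftEquated (S : Type*) [Monoid S] : Prop :=
  ∀ a : S, ∃ R : Set (S × S), R.Finite ∧ ∀ s t : S, s * a = t * a ↔ leftConGen R s t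

/-- A monoid is a group: every element has a two-sided inverse. -/
def IsGroupMonoid (S : Type*) [Monoid S] : Prop :=
  ∀ a : S, ∃ b : S, a * b = 1 ∧ b * a = 1

/-- Weakly left coherent: left ideal Howson and finitely left equated. -/
def WeaklyLeftCoherent (S : Type*) [Monoid S] : Prop :=
  LeftIdealHowson S ∧ FinitelyLeftEquated S

/-- The restricted direct product of a family of monoids: elements of the direct
product with only finitely many non-identity coordinates. -/
def restrictedDirectProduct {ι : Type*} (M : ι → Type*) [∀ i, Monoid (M i)] :
    Submonoid (∀ i, M i) where
  carrier := {f | {i | f i ≠ 1}.Finite}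
  one_mem' := by simp
  mul_mem' := by
    intro f g hf hg
    refine Set.Finite.subset (hf.union hg) ?_
    intro i hi
    rw [Set.mem_union]
    by_contra h
    push_neg at h
    obtain ⟨h1, h2⟩ := h
    simp only [Set.mem_setOf_eq, not_not] at h1 h2
    apply hi
    show f i * g i = 1
    rw [h1, h2, one_mul]

/-- Condition (i) for relative completeness: both monoids have two elements, at least
one is not a group, and both vertices are adjacent to every other vertex. -/
def RCcondI (G : SimpleGraph V) (M : V → Type*) [∀ α, Monoid (M α)]
    (α β : V) : Prop :=
  Nat.card (M α) = 2 ∧ Nat.card (M β) = 2 ∧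
  (¬ IsGroupMonoid (M α) ∨ ¬ IsGroupMonoid (M β)) ∧
  ∀ γ : V, γ ≠ α → γ ≠ β → G.Adj α γ ∧ G.Adj β γ

/-- `G` is relatively complete with respect to the family `M` of vertex monoids. -/
def RelativelyComplete (G : SimpleGraph V) (M : V → Type*)
    [∀ α, Monoid (M α)] : Prop :=
  (∀ α β : V, α ≠ β → ¬ G.Adj α β →
      RCcondI G M α β ∨ (IsGroupMonoid (M α) ∧ IsGroupMonoid (M β))) ∧
  ∀ α β α' β' : V, α ≠ β → ¬ G.Adj α β → RCcondI G M α β →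
    α' ≠ β' → ¬ G.Adj α' β' → RCcondI G M α' β' →
    (α = α' ∧ β = β') ∨ (α = β' ∧ β = α')

/-!
The graph product maps onto the direct product `∀ α, M α`, a letter `x` going to
`Pi.mulSingle x.1 x.2`. The letters of a complete block have distinct supports, so this
projection sees each letter of a block on its own. If `g[b] = [a]` and `y` is a letter of `b`
at `α`, the `α`-component reads `g_α * y.2 = 1` when `α ∉ s(a)`, impossible as `y` is not left
invertible, and `g_α * y.2 = x.2` for the letter `x` of `a` at `α` otherwise. Conversely, the
letters of a complete block commute, so `[a] = [r][a_{f 1}]⋯[a_{f n}]`; writing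
`a_{f i} = c_i * b_i` in `M_α`, each `c_j` commutes past `b_i` for `i < j`, which gives
`[a] = [r][c_1]⋯[c_n][b]`.
-/

section PrincipalLeftIdeal

variable {S T : Type*} [Monoid S] [Monoid T]

theorem plIdeal_subset_iff {a b : S} : plIdeal a ⊆ plIdeal b ↔ ∃ g, g * b = a := by
  constructor
  · intro h
    exact h ⟨1, one_mul a⟩
  · rintro ⟨g, rfl⟩ _ ⟨s, rfl⟩
    exact ⟨s * g, mul_assoc s g b⟩

theorem plIdeal_map_subset (f : S →* T) {a b : S} (h : plIdeal a ⊆ plIdeal b) :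
    plIdeal (f a) ⊆ plIdeal (f b) := by
  obtain ⟨g, rfl⟩ := plIdeal_subset_iff.mp h
  exact plIdeal_subset_iff.mpr ⟨f g, (map_mul f g b).symm⟩

end PrincipalLeftIdeal

theorem List.prod_ofFn_mul_of_commute {S : Type*} [Monoid S] :
    ∀ {n : ℕ} (w v : Fin n → S), (∀ i j, i < j → Commute (v i) (w j)) →
      (List.ofFn fun i => w i * v i).prod = (List.ofFn w).prod * (List.ofFn v).prod
  | 0, _, _, _ => by simp
  | n + 1, w, v, h => by
    have hv₀ : Commute (v 0) (List.ofFn fun i => w i.succ).prod :=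
      Commute.list_prod_right _ _ fun x hx => by
        obtain ⟨i, rfl⟩ := List.mem_ofFn.mp hx
        exact h 0 i.succ (Fin.succ_pos i)
    simp only [List.ofFn_succ, List.prod_cons]
    rw [prod_ofFn_mul_of_commute (fun i => w i.succ) (fun i => v i.succ)
      fun i j hij => h i.succ j.succ (Fin.succ_lt_succ_iff.mpr hij), mul_assoc, ← mul_assoc (v 0),
      hv₀.eq]
    simp only [mul_assoc]

theorem List.exists_perm_append_ofFn_get_comp {α : Type*} {l : List α} {n : ℕ}
    {f : Fin n → Fin l.length} (hf : Function.Injective f) :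
    ∃ r, l.Perm (r ++ List.ofFn (l.get ∘ f)) := by
  have hsub : (List.ofFn f).Subperm (List.finRange l.length) :=
    (List.nodup_ofFn.mpr hf).subperm fun i _ => List.mem_finRange i
  obtain ⟨c, hc, hcl⟩ := hsub
  obtain ⟨r, hr⟩ := (List.map_get_finRange l ▸ hcl.map l.get).exists_perm_append
  refine ⟨r, hr.trans (List.perm_append_comm.trans (List.Perm.append_left r ?_))⟩
  rw [← List.map_ofFn]
  exact hc.map l.get

theorem List.injective_comp_get_of_pairwise {α β : Type*} {φ : α → β} {l : List α}
    (h : l.Pairwise fun x y => φ x ≠ φ y) : Function.Injective (φ ∘ l.get) := by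
  intro i j hij
  by_contra hne
  rcases lt_or_gt_of_ne hne with hlt | hlt
  · exact List.pairwise_iff_get.mp h i j hlt hij
  · exact List.pairwise_iff_get.mp h j i hlt hij.symm

section GraphProduct

variable {G : SimpleGraph V} {M : V → Type*} [∀ α, Monoid (M α)]

theorem gpMk_append (l₁ l₂ : List (GPLetter M)) :
    gpMk G M (l₁ ++ l₂) = gpMk G M l₁ * gpMk G M l₂ := by
  rw [gpMk, gpMk, gpMk, FreeMonoid.ofList_append, map_mul]

theorem gpMk_eq_prod (l : List (GPLetter M)) :
    gpMk G M l = (l.map fun x => gpMk G M [x]).prod := by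
  induction l with
  | nil => rfl
  | cons x l ih => rw [← List.singleton_append, gpMk_append, ih]; rfl

theorem gpMk_ofFn {n : ℕ} (w : Fin n → GPLetter M) :
    gpMk G M (List.ofFn w) = (List.ofFn fun i => gpMk G M [w i]).prod := by
  rw [gpMk_eq_prod, List.map_ofFn]
  rfl

theorem gpMk_singleton_mul (α : V) (x y : M α) :
    gpMk G M [⟨α, x * y⟩] = gpMk G M [⟨α, x⟩] * gpMk G M [⟨α, y⟩] := by
  rw [← gpMk_append, eq_comm]
  exact (Con.eq _).mpr (ConGen.Rel.of _ _ (Or.inr (Or.inl ⟨α, x, y, rfl, rfl⟩)))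

theorem commute_gpMk_singleton {x y : GPLetter M} (h : G.Adj x.1 y.1) :
    Commute (gpMk G M [x]) (gpMk G M [y]) := by
  rw [commute_iff_eq, ← gpMk_append, ← gpMk_append]
  exact (Con.eq _).mpr (ConGen.Rel.of _ _ (Or.inr (Or.inr ⟨x.1, y.1, x.2, y.2, h, rfl, rfl⟩)))

theorem gpMk_perm {l l' : List (GPLetter M)} (h : l.Perm l')
    (hl : l.Pairwise fun x y => G.Adj x.1 y.1) : gpMk G M l = gpMk G M l' := by
  rw [gpMk_eq_prod, gpMk_eq_prod]
  exact (h.map _).prod_eq' (List.pairwise_map.mpr (hl.imp commute_gpMk_singleton))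

theorem CompleteBlock.pairwise_fst_ne {l : List (GPLetter M)} (h : CompleteBlock G M l) :
    l.Pairwise fun x y => x.1 ≠ y.1 := by
  obtain ⟨⟨-, hred⟩, hcomp⟩ := h
  suffices ∀ j i, i < j → (l.get i).1 ≠ (l.get j).1 from
    List.pairwise_iff_get.mpr fun i j hij => this j i hij
  intro j
  induction j using WellFoundedLT.induction with
  | _ j ih =>
    intro i hij heq
    obtain ⟨k, hik, hkj, hnadj⟩ := hred i j hij heq
    -- completeness forces `l.get k` to share the support of `l.get i`: a closer such pair
    have hik' : (l.get i).1 = (l.get k).1 := by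
      by_contra hne
      exact hnadj (hcomp _ (l.get_mem i) _ (l.get_mem k) hne)
    exact ih k hkj i hik hik'

theorem CompleteBlock.pairwise_adj {l : List (GPLetter M)} (h : CompleteBlock G M l) :
    l.Pairwise fun x y => G.Adj x.1 y.1 :=
  h.pairwise_fst_ne.imp_of_mem fun hx hy hne => h.2 _ hx _ hy hne

variable (G M) in
open Classical in
noncomputable def gpToPi : GraphProduct G M →* ∀ α, M α :=
  (gpCon G M).lift (FreeMonoid.lift fun x => Pi.mulSingle x.1 x.2) <| by
    rw [gpCon, Con.conGen_le]
    rintro w₁ w₂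
      (⟨α, rfl, rfl⟩ | ⟨α, x, y, rfl, rfl⟩ | ⟨α, β, x, y, hadj, rfl, rfl⟩) <;>
      simp only [Con.ker_rel, map_mul, map_one, FreeMonoid.lift_eval_of]
    · exact Pi.mulSingle_one α
    · exact (Pi.mulSingle_mul α x y).symm
    · exact Pi.mulSingle_commute hadj.ne x y

open Classical in
theorem gpToPi_gpMk_singleton (x : GPLetter M) :
    gpToPi G M (gpMk G M [x]) = Pi.mulSingle x.1 x.2 := by
  rw [gpMk, gpToPi, Con.lift_mk', FreeMonoid.lift_ofList, List.map_singleton, List.prod_singleton]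

theorem gpToPi_gpMk_singleton_self (x : GPLetter M) :
    gpToPi G M (gpMk G M [x]) x.1 = x.2 := by
  classical
  rw [gpToPi_gpMk_singleton, Pi.mulSingle_eq_same]

theorem gpToPi_gpMk_singleton_of_ne {x : GPLetter M} {α : V} (h : x.1 ≠ α) :
    gpToPi G M (gpMk G M [x]) α = 1 := by
  classical
  rw [gpToPi_gpMk_singleton, Pi.mulSingle_eq_of_ne' h]

theorem gpToPi_gpMk_of_notMem {l : List (GPLetter M)} {α : V} (h : α ∉ suppSet M l) :
    gpToPi G M (gpMk G M l) α = 1 := by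
  induction l with
  | nil => exact congrFun (map_one (gpToPi G M)) α
  | cons y l ih =>
    rw [← List.singleton_append, gpMk_append, map_mul, Pi.mul_apply,
      gpToPi_gpMk_singleton_of_ne fun hy => h ⟨y, List.mem_cons_self, hy⟩,
      ih fun ⟨z, hz, hzα⟩ => h ⟨z, List.mem_cons_of_mem y hz, hzα⟩, one_mul]

theorem gpToPi_gpMk_of_mem {l : List (GPLetter M)} (hl : l.Pairwise fun x y => x.1 ≠ y.1)
    {x : GPLetter M} (hx : x ∈ l) {α : V} (hα : x.1 = α) :
    gpToPi G M (gpMk G M l) α = gpToPi G M (gpMk G M [x]) α := by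
  induction l with
  | nil => cases hx
  | cons y l ih =>
    rw [List.pairwise_cons] at hl
    rw [← List.singleton_append, gpMk_append, map_mul, Pi.mul_apply]
    rcases List.mem_cons.mp hx with rfl | hx
    · rw [gpToPi_gpMk_of_notMem fun ⟨z, hz, hzα⟩ => hl.1 z hz (hα.trans hzα.symm), mul_one]
    · rw [gpToPi_gpMk_singleton_of_ne fun h => hl.1 x hx (h.trans hα.symm), one_mul, ih hl.2 hx]

theorem plIdeal_gpToPi_apply_subset {u v : GraphProduct G M} (h : plIdeal u ⊆ plIdeal v)
    (α : V) : plIdeal (gpToPi G M u α) ⊆ plIdeal (gpToPi G M v α) :=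
  plIdeal_map_subset ((Pi.evalMonoidHom M α).comp (gpToPi G M)) h

theorem exists_gpMk_singleton_eq_mul {x y : GPLetter M} (hs : x.1 = y.1)
    (h : plIdeal (gpToPi G M (gpMk G M [x]) y.1) ⊆ plIdeal y.2) :
    ∃ c : M y.1, gpMk G M [x] = gpMk G M [⟨y.1, c⟩] * gpMk G M [y] := by
  obtain ⟨α, u⟩ := x
  obtain ⟨β, v⟩ := y
  dsimp only at hs
  subst hs
  rw [gpToPi_gpMk_singleton_self] at h
  obtain ⟨c, rfl⟩ := plIdeal_subset_iff.mp h
  exact ⟨c, gpMk_singleton_mul α c v⟩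

theorem CompleteBlock.exists_mem_plIdeal_singleton_subset {a b : List (GPLetter M)}
    (ha : CompleteBlock G M a) (hb : CompleteBlock G M b)
    (hbinv : ∀ y ∈ b, ¬ LeftInvertibleLetter M y)
    (hab : plIdeal (gpMk G M a) ⊆ plIdeal (gpMk G M b)) {y : GPLetter M} (hy : y ∈ b) :
    ∃ x ∈ a, x.1 = y.1 ∧ plIdeal (gpMk G M [x]) ⊆ plIdeal (gpMk G M [y]) := by
  have hproj := plIdeal_gpToPi_apply_subset hab y.1
  rw [gpToPi_gpMk_of_mem hb.pairwise_fst_ne hy rfl, gpToPi_gpMk_singleton_self] at hproj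
  by_cases hya : y.1 ∈ suppSet M a
  · obtain ⟨x, hx, hxy⟩ := hya
    rw [gpToPi_gpMk_of_mem ha.pairwise_fst_ne hx hxy] at hproj
    obtain ⟨c, hc⟩ := exists_gpMk_singleton_eq_mul hxy hproj
    exact ⟨x, hx, hxy, plIdeal_subset_iff.mpr ⟨_, hc.symm⟩⟩
  · rw [gpToPi_gpMk_of_notMem hya] at hproj
    exact absurd (plIdeal_subset_iff.mp hproj) (hbinv y hy)

theorem CompleteBlock.plIdeal_gpMk_subset {a b : List (GPLetter M)}
    (ha : CompleteBlock G M a) (hb : CompleteBlock G M b) {f : Fin b.length → Fin a.length}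
    (hf : Function.Injective f)
    (hfab : ∀ i, (a.get (f i)).1 = (b.get i).1 ∧
      plIdeal (gpMk G M [a.get (f i)]) ⊆ plIdeal (gpMk G M [b.get i])) :
    plIdeal (gpMk G M a) ⊆ plIdeal (gpMk G M b) := by
  choose c hc using fun i => exists_gpMk_singleton_eq_mul (hfab i).1 <| by
    simpa only [gpToPi_gpMk_singleton_self] using
      plIdeal_gpToPi_apply_subset (hfab i).2 (b.get i).1
  obtain ⟨r, hr⟩ := List.exists_perm_append_ofFn_get_comp hf
  have hcomm : ∀ i j, i < j →
      Commute (gpMk G M [b.get i]) (gpMk G M [⟨(b.get j).1, c j⟩]) :=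
    fun i j hij => commute_gpMk_singleton (List.pairwise_iff_get.mp hb.pairwise_adj i j hij)
  refine plIdeal_subset_iff.mpr
    ⟨gpMk G M r * (List.ofFn fun i => gpMk G M [⟨_, c i⟩]).prod, ?_⟩
  rw [gpMk_perm hr ha.pairwise_adj, gpMk_append, gpMk_ofFn, Function.comp_def, funext hc,
    List.prod_ofFn_mul_of_commute _ _ hcomm, ← gpMk_ofFn b.get, List.ofFn_get, mul_assoc]

end GraphProduct

theorem stmt6_general {V : Type*} (G : SimpleGraph V) (M : V → Type*) [∀ α, Monoid (M α)]
    (a b : List (GPLetter M))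
    (ha : CompleteBlock G M a) (hb : CompleteBlock G M b)
    (hbinv : ∀ x ∈ b, ¬ LeftInvertibleLetter M x) :
    plIdeal (gpMk G M a) ⊆ plIdeal (gpMk G M b) ↔
      (suppSet M b ⊆ suppSet M a ∧
        ∃ f : Fin b.length → Fin a.length, Function.Injective f ∧
          ∀ i : Fin b.length, (a.get (f i)).1 = (b.get i).1 ∧
            plIdeal (gpMk G M [a.get (f i)]) ⊆ plIdeal (gpMk G M [b.get i])) := by
  constructor
  · intro hab
    have hletter := fun y hy => ha.exists_mem_plIdeal_singleton_subset hb hbinv hab (y := y) hy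
    have hindex : ∀ i, ∃ j, (a.get j).1 = (b.get i).1 ∧
        plIdeal (gpMk G M [a.get j]) ⊆ plIdeal (gpMk G M [b.get i]) := fun i => by
      obtain ⟨x, hx, hxy⟩ := hletter (b.get i) (b.get_mem i)
      obtain ⟨j, rfl⟩ := List.mem_iff_get.mp hx
      exact ⟨j, hxy⟩
    choose f hf using hindex
    refine ⟨fun α ⟨y, hy, hyα⟩ => ?_, f, fun i j hij => ?_, hf⟩
    · obtain ⟨x, hx, hxy, -⟩ := hletter y hy
      exact ⟨x, hx, hxy.trans hyα⟩
    · refine List.injective_comp_get_of_pairwise hb.pairwise_fst_ne ?_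
      simp only [Function.comp_apply, ← (hf i).1, ← (hf j).1, hij]
  · rintro ⟨-, f, hf, hfab⟩
    exact ha.plIdeal_gpMk_subset hb hf hfab

/-- comparison of principal left ideals of complete blocks with no left
invertible letters. -/
theorem stmt6 {V : Type*} (G : SimpleGraph V) (M : V → Type*) [∀ α, Monoid (M α)]
    (a b : List (GPLetter M))
    (ha : CompleteBlock G M a) (hb : CompleteBlock G M b)
    (hainv : ∀ x ∈ a, ¬ LeftInvertibleLetter M x)
    (hbinv : ∀ x ∈ b, ¬ LeftInvertibleLetter M x) :
    plIdeal (gpMk G M a) ⊆ plIdeal (gpMk G M b) ↔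
      (suppSet M b ⊆ suppSet M a ∧
        ∃ f : Fin b.length → Fin a.length, Function.Injective f ∧
          ∀ i : Fin b.length, (a.get (f i)).1 = (b.get i).1 ∧
            plIdeal (gpMk G M [a.get (f i)]) ⊆ plIdeal (gpMk G M [b.get i])) :=
  stmt6_general G M a b ha hb hbinv
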